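/- arXiv:1102.0758 — 2 statements merged into one kernel-verified Lean document; each statement's English description precedes it below -/
import Mathlib

section
/- Let T be a finite unitrivalent tree with univalent vertices labeled by {1,…,m}, and for each univalent vertex v let B_v(T) ∈ L_{n+1} be the Lie bracket in the free Lie ring L on X₁,…,X_m obtained by taking v as root (where n is the number of trivalent vertices of T). Then the element η(T) := Σ_v X_{ℓ(v)} ⊗ B_v(T), summing over all univalent vertices v with label ℓ(v), lies in the kernel D_n of the bracket map L₁ ⊗ L_{n+1} → L_{n+2}. -/
open scoped TensorProduct

/-- Rooted labeled unitrivalent trees with leaves labeled in `Fin m`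
(equivalently, formal non-associative bracketings of the labels). -/
inductive RTree (m : ℕ) : Type
  | leaf : Fin m → RTree m
  | node : RTree m → RTree m → RTree m

/-- The free Lie ring on `m` generators. -/
abbrev FreeLieZ (m : ℕ) := FreeLieAlgebra ℤ (Fin m)

/-- The Lie element associated to a rooted tree: each trivalent vertex is a
Lie bracket. -/
noncomputable def RTree.lieOf {m : ℕ} : RTree m → FreeLieZ m
  | .leaf i => FreeLieAlgebra.of ℤ i
  | .node a b => ⁅RTree.lieOf a, RTree.lieOf b⁆

/-- Auxiliary sum-over-roots map: `etaAux T w = Σ_{v leaf of T} X_{ℓ(v)} ⊗ B_v`,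
where `w` is the Lie element of the complement of `T` in the glued unrooted tree
and `B_v` is the Lie bracket obtained by re-rooting at `v`. -/
noncomputable def etaAux {m : ℕ} : RTree m → FreeLieZ m → FreeLieZ m ⊗[ℤ] FreeLieZ m
  | .leaf i, w => FreeLieAlgebra.of ℤ i ⊗ₜ[ℤ] w
  | .node a b, w => etaAux a ⁅RTree.lieOf b, w⁆ + etaAux b ⁅w, RTree.lieOf a⁆

/-- `η` of the unrooted tree `⟨I,J⟩` obtained by gluing the roots of `I` and `J`:
the sum `Σ_v X_{ℓ(v)} ⊗ B_v(⟨I,J⟩)` over all univalent vertices. -/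
noncomputable def etaGlue {m : ℕ} (I J : RTree m) : FreeLieZ m ⊗[ℤ] FreeLieZ m :=
  etaAux I (RTree.lieOf J) + etaAux J (RTree.lieOf I)

/-- `η(J^∞) := (1/2)·η(⟨J,J⟩)`, realized as the canonical half
`etaAux J (lieOf J)` of `etaGlue J J`. -/
noncomputable def etaInf {m : ℕ} (J : RTree m) : FreeLieZ m ⊗[ℤ] FreeLieZ m :=
  etaAux J (RTree.lieOf J)

/-- The bracket map `L ⊗ L → L`, `X ⊗ Y ↦ [X,Y]`; `D_n` is its kernel on the
graded piece `L₁ ⊗ L_{n+1}`. -/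
noncomputable def bracketMap (m : ℕ) : FreeLieZ m ⊗[ℤ] FreeLieZ m →ₗ[ℤ] FreeLieZ m :=
  TensorProduct.lift (LinearMap.mk₂ ℤ (fun x y => ⁅x, y⁆)
    (fun _ _ _ => add_lie _ _ _)
    (fun _ _ _ => smul_lie _ _ _)
    (fun _ _ _ => lie_add _ _ _)
    (fun _ _ _ => lie_smul _ _ _))

/-! By the Jacobi identity, applying the bracket to the sum over the leaves of one half `I`
of `⟨I,J⟩` collapses to the single bracket `⁅I, J⁆`, the complement `w` of a subtree being
carried along as the root label. Hence `η(⟨I,J⟩)` maps to `⁅I, J⁆ + ⁅J, I⁆ = 0`. -/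

@[simp]
lemma bracketMap_tmul {m : ℕ} (x y : FreeLieZ m) : bracketMap m (x ⊗ₜ[ℤ] y) = ⁅x, y⁆ :=
  TensorProduct.lift.tmul _ _

lemma bracketMap_etaAux {m : ℕ} (T : RTree m) (w : FreeLieZ m) :
    bracketMap m (etaAux T w) = ⁅T.lieOf, w⁆ := by
  induction T generalizing w with
  | leaf i => exact bracketMap_tmul _ _
  | node a b iha ihb =>
    rw [etaAux, RTree.lieOf, map_add, iha, ihb, lie_lie, ← lie_skew a.lieOf w, lie_neg]
    abel

/-- For any unrooted labeled unitrivalent tree `T = ⟨I,J⟩` (every such tree arises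
by gluing two rooted trees at the roots), the element
`η(T) = Σ_v X_{ℓ(v)} ⊗ B_v(T)` lies in the kernel `D_n` of the bracket map
(cyclic symmetry). -/
theorem eta_mem_ker_bracketMap (m : ℕ) (I J : RTree m) :
    etaGlue I J ∈ LinearMap.ker (bracketMap m) := by
  rw [LinearMap.mem_ker, etaGlue, map_add, bracketMap_etaAux, bracketMap_etaAux, ← lie_skew,
    neg_add_cancel]
end

section
/- η vanishes on boundary-twist relators: for any label i ∈ {1,…,m} and any rooted labeled unitrivalent tree J, the element η(⟨(i,J),J⟩) = 0 in L₁ ⊗ L, where ⟨(i,J),J⟩ is the unrooted tree obtained by gluing the root of (i,J) to the root of J. -/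
open scoped TensorProduct

lemma etaAux_zero {m : ℕ} (T : RTree m) : etaAux T (0 : FreeLieZ m) = 0 := by
  induction T with
  | leaf i => simp [etaAux]
  | node a b ha hb => simp [etaAux, ha, hb]

lemma etaAux_add {m : ℕ} (T : RTree m) (w w' : FreeLieZ m) :
    etaAux T (w + w') = etaAux T w + etaAux T w' := by
  induction T generalizing w w' with
  | leaf i => simp [etaAux, TensorProduct.tmul_add]
  | node a b ha hb =>
    simp only [etaAux, lie_add, add_lie, ha, hb]
    abel

/-- `η` vanishes on boundary-twist relators: for any label `i` and rooted tree
`J`, `η(⟨(i,J),J⟩) = 0` in `L₁ ⊗ L`. -/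
theorem eta_boundary_twist (m : ℕ) (i : Fin m) (J : RTree m) :
    etaGlue (RTree.node (RTree.leaf i) J) J = 0 := by
  have h : ⁅RTree.lieOf J, FreeLieAlgebra.of ℤ i⁆ + ⁅FreeLieAlgebra.of ℤ i, RTree.lieOf J⁆
      = (0 : FreeLieZ m) := by
    rw [← lie_skew]; abel
  simp only [etaGlue, etaAux, RTree.lieOf, lie_self, TensorProduct.tmul_zero,
    zero_add]
  rw [← etaAux_add, h, etaAux_zero]
end
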